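/- arXiv:2201.12484 — 6 statements merged into one kernel-verified Lean document; each statement's English description precedes it below -/
import Mathlib

section
/- For any stable matching instance with equal numbers of men and women and strict complete preference lists, the men-proposing Deferred Acceptance algorithm terminates and outputs a matching with no blocking pair, i.e., a stable matching always exists. -/
open Finset

/-- A stable matching instance: `n` men and `n` women; `mrank m w` is the
(0-indexed) rank of woman `w` in man `m`'s strict preference list (lower = more
preferred); `wrank w m` analogously. -/
structure SMInstance (n : ℕ) where
  mrank : Fin n → Fin n → Fin n
  wrank : Fin n → Fin n → Fin n
  mbij : ∀ m, Function.Bijective (mrank m)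
  wbij : ∀ w, Function.Bijective (wrank w)

namespace SMInstance

variable {n : ℕ}

/-- `(m, w)` is a blocking pair of the perfect matching `μ`. -/
def Blocking (I : SMInstance n) (μ : Equiv.Perm (Fin n)) (m w : Fin n) : Prop :=
  μ m ≠ w ∧ I.mrank m w < I.mrank m (μ m) ∧ I.wrank w m < I.wrank w (μ.symm w)

/-- A matching is stable if it admits no blocking pair. -/
def Stable (I : SMInstance n) (μ : Equiv.Perm (Fin n)) : Prop :=
  ∀ m w, ¬ I.Blocking μ m w

/-- Total (1-indexed) rank of partners over men. -/
def SM (I : SMInstance n) (μ : Equiv.Perm (Fin n)) : ℤ :=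
  ∑ m : Fin n, (((I.mrank m (μ m) : ℕ) : ℤ) + 1)

/-- Total (1-indexed) rank of partners over women. -/
def SW (I : SMInstance n) (μ : Equiv.Perm (Fin n)) : ℤ :=
  ∑ w : Fin n, (((I.wrank w (μ.symm w) : ℕ) : ℤ) + 1)

/-- The sex-equality cost of a matching. -/
def cost (I : SMInstance n) (μ : Equiv.Perm (Fin n)) : ℤ :=
  |I.SM μ - I.SW μ|

end SMInstance

/-!
Deferred acceptance, stripped to its invariant. A state records, for each man, how far down his
list he has moved; he proposes to the woman at that position. The invariant is that every woman a
man has moved past currently receives a proposal she prefers to his. A man is rejected when the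
woman he proposes to receives a better proposal; moving him one step preserves the invariant, and
by a pigeonhole count a rejected man is never at the end of his list. A state satisfying the
invariant with maximal total progress therefore has no rejected man, so the proposals form a
perfect matching, and the invariant says exactly that it has no blocking pair.
-/

namespace SMInstance

variable {n : ℕ} (I : SMInstance n)

/-- Man `m`'s `k`-th choice (0-indexed). -/
noncomputable def choice (m : Fin n) : Fin n → Fin n :=
  (Equiv.ofBijective _ (I.mbij m)).symm

@[simp]
lemma mrank_choice (m k : Fin n) : I.mrank m (I.choice m k) = k :=
  (Equiv.ofBijective _ (I.mbij m)).apply_symm_apply k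

lemma choice_eq_iff {m k w : Fin n} : I.choice m k = w ↔ I.mrank m w = k :=
  (Equiv.ofBijective _ (I.mbij m)).symm_apply_eq.trans eq_comm

/-- Under the proposals `g : men → women`, the woman `m` proposes to has a preferred proposer. -/
def Rejected (g : Fin n → Fin n) (m : Fin n) : Prop :=
  ∃ m', g m' = g m ∧ I.wrank (g m) m' < I.wrank (g m) m

lemma exists_not_rejected_le {g : Fin n → Fin n} {m w : Fin n} (hm : g m = w) :
    ∃ b, g b = w ∧ ¬ I.Rejected g b ∧ I.wrank w b ≤ I.wrank w m := by
  classical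
  obtain ⟨b, hb, hmin⟩ := Finset.exists_min_image
    {p | g p = w} (I.wrank w) ⟨m, by simpa using hm⟩
  rw [Finset.mem_filter_univ] at hb
  refine ⟨b, hb, ?_, hmin m (by simpa using hm)⟩
  rintro ⟨m', hm', hlt⟩
  rw [hb] at hm' hlt
  exact (hmin m' (by simpa using hm')).not_gt hlt

lemma injective_of_forall_not_rejected {g : Fin n → Fin n} (h : ∀ m, ¬ I.Rejected g m) :
    Function.Injective g := by
  intro a b hab
  by_contra hne
  rcases lt_trichotomy (I.wrank (g a) a) (I.wrank (g a) b) with hlt | heq | hgt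
  · exact h b ⟨a, hab, hab ▸ hlt⟩
  · exact hne ((I.wbij (g a)).injective heq)
  · exact h a ⟨b, hab.symm, hgt⟩

/-- Pigeonhole: choosing such a proposer for each woman gives an injection, hence a bijection,
onto the men, so `m` itself would be chosen. -/
lemma not_forall_exists_preferred_proposer (g : Fin n → Fin n) (m : Fin n) :
    ¬ ∀ w, ∃ p, g p = w ∧ I.wrank w p < I.wrank w m := by
  intro h
  choose f hfg hf using h
  have hinj : Function.Injective f := fun a b hab => by rw [← hfg a, ← hfg b, hab]
  obtain ⟨w, hw⟩ := Finite.injective_iff_surjective.mp hinj m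
  exact (hf w).ne (by rw [hw])

noncomputable def proposal (r : Fin n → Fin n) (m : Fin n) : Fin n :=
  I.choice m (r m)

def IsDAState (r : Fin n → Fin n) : Prop :=
  ∀ w m, I.mrank m w < r m → ∃ m', I.proposal r m' = w ∧ I.wrank w m' < I.wrank w m

lemma isDAState_initial : I.IsDAState fun m => ⟨0, m.pos⟩ :=
  fun _ _ h => absurd (Fin.lt_def.mp h) (Nat.not_lt_zero _)

namespace IsDAState

variable {I} {r : Fin n → Fin n}

lemma succ_lt_of_rejected (hr : I.IsDAState r) {m : Fin n}
    (hm : I.Rejected (I.proposal r) m) : (r m : ℕ) + 1 < n := by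
  by_contra hlast
  refine I.not_forall_exists_preferred_proposer (I.proposal r) m fun w => ?_
  by_cases hw : I.proposal r m = w
  · obtain ⟨m', hm', hlt⟩ := hm
    exact ⟨m', hm'.trans hw, hw ▸ hlt⟩
  · refine hr w m (Fin.lt_def.mpr ?_)
    have hne : I.mrank m w ≠ r m := fun h => hw ((I.choice_eq_iff).mpr h)
    have := (I.mrank m w).isLt
    have := Fin.val_ne_of_ne hne
    omega

lemma update_succ (hr : I.IsDAState r) {m : Fin n} (hm : I.Rejected (I.proposal r) m) :
    I.IsDAState (Function.update r m ⟨r m + 1, hr.succ_lt_of_rejected hm⟩) := by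
  set r' := Function.update r m ⟨r m + 1, hr.succ_lt_of_rejected hm⟩
  -- Only the rejected man `m` moves, so the best proposer of each woman keeps proposing to her.
  have keep : ∀ w m₁, (∃ m', I.proposal r m' = w ∧ I.wrank w m' < I.wrank w m₁) →
      ∃ m', I.proposal r' m' = w ∧ I.wrank w m' < I.wrank w m₁ := by
    rintro w m₁ ⟨m', hm', hlt⟩
    obtain ⟨b, hb, hb_nrej, hle⟩ := I.exists_not_rejected_le hm'
    have hbm : b ≠ m := by rintro rfl; exact hb_nrej hm
    refine ⟨b, ?_, hle.trans_lt hlt⟩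
    simpa [proposal, r', hbm] using hb
  intro w m₁ hlt
  by_cases hm₁ : m₁ = m
  · subst hm₁
    have hlt' : (I.mrank m₁ w : ℕ) < r m₁ + 1 := by simpa [r', Fin.lt_def] using hlt
    rcases Nat.lt_succ_iff_lt_or_eq.mp hlt' with hlt'' | heq
    · exact keep w m₁ (hr w m₁ hlt'')
    · have hw : I.proposal r m₁ = w := (I.choice_eq_iff).mpr (Fin.ext heq)
      obtain ⟨m', hm', hpref⟩ := hm
      exact keep w m₁ ⟨m', hm'.trans hw, hw ▸ hpref⟩
  · exact keep w m₁ (hr w m₁ (by simpa [r', hm₁] using hlt))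

lemma exists_advance (hr : I.IsDAState r) {m : Fin n} (hm : I.Rejected (I.proposal r) m) :
    ∃ r', I.IsDAState r' ∧ ∑ m, (r m : ℕ) < ∑ m, (r' m : ℕ) := by
  refine ⟨_, hr.update_succ hm, Finset.sum_lt_sum (fun b _ => ?_) ⟨m, Finset.mem_univ m, ?_⟩⟩
  · by_cases hb : b = m
    · subst hb; simp
    · simp [hb]
  · simp

lemma stable_of_forall_not_rejected (hr : I.IsDAState r)
    (hterm : ∀ m, ¬ I.Rejected (I.proposal r) m) :
    I.Stable (Equiv.ofBijective _
      (Finite.injective_iff_bijective.mp (I.injective_of_forall_not_rejected hterm))) := by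
  rintro m w ⟨-, hm_pref, hw_pref⟩
  obtain ⟨m', rfl, hm'⟩ := hr w m (by simpa [proposal] using hm_pref)
  rw [Equiv.ofBijective_symm_apply_apply] at hw_pref
  exact hm'.not_gt hw_pref

end IsDAState

end SMInstance

/-- for any instance with equal numbers of men and women and strict
complete preferences, the men-proposing Deferred Acceptance algorithm terminates
with a matching having no blocking pair; i.e., a stable matching always exists. -/
theorem stable_matching_exists {n : ℕ} (I : SMInstance n) :
    ∃ μ : Equiv.Perm (Fin n), I.Stable μ := by
  classical
  obtain ⟨r, hr, hmax⟩ := Finset.exists_max_image {r | I.IsDAState r}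
    (fun r => ∑ m, (r m : ℕ)) ⟨_, (Finset.mem_filter_univ _).mpr I.isDAState_initial⟩
  rw [Finset.mem_filter_univ] at hr
  refine ⟨_, hr.stable_of_forall_not_rejected fun m hm => ?_⟩
  obtain ⟨r', hr', hlt⟩ := hr.exists_advance hm
  exact (hmax r' ((Finset.mem_filter_univ _).mpr hr')).not_gt hlt
end

section
/- In the men-proposing Deferred Acceptance algorithm, once a woman receives a proposal she is matched in every subsequent round, and the partner she holds only (weakly) improves over the course of the algorithm. -/
open Finset

/-! A woman's new partner is the best of a candidate set (her proposers and her current partner).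
This set contains the current partner, so her partner's rank can only improve, and as soon as
it is nonempty she holds someone; by induction she then holds someone forever. -/

namespace DeferredAcceptance

variable {α β : Type*} [LinearOrder β]

/-- One woman's view of a run: `r` is her ranking of the men, `held t` her partner and `props t`
her proposers at round `t`. -/
def KeepsBest (r : α → β) (held : ℕ → Option α) (props : ℕ → Finset α) : Prop :=
  ∀ t m, held (t + 1) = some m ↔
    ((m ∈ props t ∨ held t = some m) ∧ ∀ m', (m' ∈ props t ∨ held t = some m') → r m ≤ r m')

variable {r : α → β} {held : ℕ → Option α} {props : ℕ → Finset α}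

theorem KeepsBest.exists_held_succ (h : KeepsBest r held props) {t : ℕ} {c : α}
    (hc : c ∈ props t ∨ held t = some c) :
    ∃ m, held (t + 1) = some m ∧ ∀ m', (m' ∈ props t ∨ held t = some m') → r m ≤ r m' := by
  classical
  have mem_candidates : ∀ m, m ∈ props t ∪ (held t).toFinset ↔ (m ∈ props t ∨ held t = some m) := by
    simp [Option.mem_toFinset]
  obtain ⟨m, hm, hmin⟩ := (props t ∪ (held t).toFinset).exists_min_image r
    ⟨c, (mem_candidates c).2 hc⟩
  have hbest : ∀ m', (m' ∈ props t ∨ held t = some m') → r m ≤ r m' :=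
    fun m' hm' => hmin m' ((mem_candidates m').2 hm')
  exact ⟨m, (h t m).2 ⟨(mem_candidates m).1 hm, hbest⟩, hbest⟩

theorem KeepsBest.exists_held_le_of_le (h : KeepsBest r held props) {t : ℕ} {m : α}
    (hm : held t = some m) {t' : ℕ} (htt' : t ≤ t') :
    ∃ m', held t' = some m' ∧ r m' ≤ r m := by
  induction t', htt' using Nat.le_induction with
  | base => exact ⟨m, hm, le_rfl⟩
  | succ k _ ih =>
    obtain ⟨m', hm', hm'm⟩ := ih
    obtain ⟨m'', hm'', hbest⟩ := h.exists_held_succ (Or.inr hm')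
    exact ⟨m'', hm'', (hbest m' (Or.inr hm')).trans hm'm⟩

theorem KeepsBest.exists_held_of_lt (h : KeepsBest r held props) {t : ℕ}
    (hprops : (props t).Nonempty) {t' : ℕ} (htt' : t < t') :
    ∃ m, held t' = some m := by
  obtain ⟨c, hc⟩ := hprops
  obtain ⟨m, hm, -⟩ := h.exists_held_succ (Or.inl hc)
  obtain ⟨m', hm', -⟩ := h.exists_held_le_of_le hm htt'
  exact ⟨m', hm'⟩

end DeferredAcceptance

open DeferredAcceptance in
theorem da_woman_monotone_general {n : ℕ} (I : SMInstance n)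
    (held : ℕ → Fin n → Option (Fin n)) (props : ℕ → Fin n → Finset (Fin n))
    (hstep : ∀ t w m, held (t + 1) w = some m ↔
      ((m ∈ props t w ∨ held t w = some m) ∧
        ∀ m', (m' ∈ props t w ∨ held t w = some m') → I.wrank w m ≤ I.wrank w m')) :
    (∀ t w m, held t w = some m → ∀ t', t ≤ t' →
        ∃ m', held t' w = some m' ∧ I.wrank w m' ≤ I.wrank w m) ∧
      (∀ t w, (props t w).Nonempty → ∀ t', t < t' → ∃ m', held t' w = some m') := by
  have keepsBest : ∀ w, KeepsBest (I.wrank w) (held · w) (props · w) :=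
    fun w t m => hstep t w m
  exact ⟨fun t w _ hm _ htt' => (keepsBest w).exists_held_le_of_le hm htt',
    fun t w hprops _ htt' => (keepsBest w).exists_held_of_lt hprops htt'⟩

/-- in a run of men-proposing Deferred Acceptance (described by the
held partner `held t w` of each woman at round `t` and the set `props t w` of men
proposing to `w` at round `t`, where each woman keeps the best man among her
current partner and her proposers), once a woman receives a proposal she is
matched in every subsequent round, and her held partner weakly improves. -/
theorem da_woman_monotone {n : ℕ} (I : SMInstance n)
    (held : ℕ → Fin n → Option (Fin n)) (props : ℕ → Fin n → Finset (Fin n))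
    (hstart : ∀ w, held 0 w = none)
    (hstep : ∀ t w m, held (t + 1) w = some m ↔
      ((m ∈ props t w ∨ held t w = some m) ∧
        ∀ m', (m' ∈ props t w ∨ held t w = some m') → I.wrank w m ≤ I.wrank w m')) :
    (∀ t w m, held t w = some m → ∀ t', t ≤ t' →
        ∃ m', held t' w = some m' ∧ I.wrank w m' ≤ I.wrank w m) ∧
      (∀ t w, (props t w).Nonempty → ∀ t', t < t' → ∃ m', held t' w = some m') :=
  da_woman_monotone_general I held props hstep
end

section
/- The men-optimal stable matching is women-pessimal: for every woman w and every stable matching μ, w weakly prefers μ(w) to her partner in the men-optimal stable matching. -/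
open Finset

namespace SMInstance

variable {n : ℕ} (I : SMInstance n)

theorem mrank_lt_of_le_of_ne {m w w' : Fin n} (hle : I.mrank m w ≤ I.mrank m w')
    (hne : w' ≠ w) : I.mrank m w < I.mrank m w' :=
  lt_of_le_of_ne hle fun h => hne ((I.mbij m).1 h).symm

variable {I}

theorem Stable.wrank_symm_le_of_mrank_le {μ : Equiv.Perm (Fin n)} (hμ : I.Stable μ)
    {m w : Fin n} (h : I.mrank m w ≤ I.mrank m (μ m)) :
    I.wrank w (μ.symm w) ≤ I.wrank w m := by
  by_cases hmw : μ m = w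
  · rw [← hmw, Equiv.symm_apply_apply]
  · exact not_lt.1 fun hw => hμ m w ⟨hmw, I.mrank_lt_of_le_of_ne h hmw, hw⟩

end SMInstance

theorem men_optimal_is_women_pessimal_general {n : ℕ} (I : SMInstance n)
    (μM : Equiv.Perm (Fin n))
    (hopt : ∀ μ : Equiv.Perm (Fin n), I.Stable μ → ∀ m : Fin n,
      I.mrank m (μM m) ≤ I.mrank m (μ m)) :
    ∀ w : Fin n, ∀ μ : Equiv.Perm (Fin n), I.Stable μ →
      I.wrank w (μ.symm w) ≤ I.wrank w (μM.symm w) := by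
  intro w μ hμ
  apply hμ.wrank_symm_le_of_mrank_le
  simpa using hopt μ hμ (μM.symm w)

/-- the men-optimal stable matching is women-pessimal: every woman
weakly prefers her partner in any stable matching to her partner in the
men-optimal stable matching. -/
theorem men_optimal_is_women_pessimal {n : ℕ} (I : SMInstance n)
    (μM : Equiv.Perm (Fin n)) (hM : I.Stable μM)
    (hopt : ∀ μ : Equiv.Perm (Fin n), I.Stable μ → ∀ m : Fin n,
      I.mrank m (μM m) ≤ I.mrank m (μ m)) :
    ∀ w : Fin n, ∀ μ : Equiv.Perm (Fin n), I.Stable μ →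
      I.wrank w (μ.symm w) ≤ I.wrank w (μM.symm w) :=
  men_optimal_is_women_pessimal_general I μM hopt
end

section
/- Given two stable matchings μ₁ and μ₂, the function assigning to each man the more preferred of μ₁(m) and μ₂(m) is itself a well-defined perfect matching and is stable (the 'join' of μ₁ and μ₂). -/
open Finset

/-!
Stable matchings are characterised by a one-line property: if a man strictly prefers a woman
to his partner, she weakly prefers her own partner to him. Suppose the join sends `a ≠ b` to the
same woman `w`, taken from `μ₁ a` and `μ₂ b`. Then `a` strictly prefers `w` to `μ₂ a` and `b`
strictly prefers `w` to `μ₁ b`, so by that property `w` ranks `b` weakly above `a` and `a`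
weakly above `b`, which is impossible. A pair blocking the join would block whichever of `μ₁`, `μ₂`
supplies the woman's partner, since every man does at least as well in the join.
-/

namespace SMInstance

variable {n : ℕ} {I : SMInstance n} {μ μ₁ μ₂ σ : Equiv.Perm (Fin n)} {m w : Fin n}

theorem Stable.wrank_symm_le (hμ : I.Stable μ) (hm : I.mrank m w < I.mrank m (μ m)) :
    I.wrank w (μ.symm w) ≤ I.wrank w m :=
  not_lt.1 fun hw => hμ m w ⟨by rintro rfl; exact hm.false, hm, hw⟩

theorem not_blocking_of_mrank_le (hμ : I.Stable μ) (hσμ : ∀ m, I.mrank m (σ m) ≤ I.mrank m (μ m))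
    (hw : μ (σ.symm w) = w) : ¬ I.Blocking σ m w := by
  rintro ⟨-, hm, hwm⟩
  have hle := hμ.wrank_symm_le (hm.trans_le (hσμ m))
  rw [μ.symm_apply_eq.2 hw.symm] at hle
  exact hwm.not_ge hle

variable (I μ₁ μ₂) in
def join (m : Fin n) : Fin n :=
  if I.mrank m (μ₁ m) ≤ I.mrank m (μ₂ m) then μ₁ m else μ₂ m

theorem join_eq_or (m : Fin n) : I.join μ₁ μ₂ m = μ₁ m ∨ I.join μ₁ μ₂ m = μ₂ m := by
  unfold join; split_ifs <;> simp

theorem mrank_join_le_left (m : Fin n) : I.mrank m (I.join μ₁ μ₂ m) ≤ I.mrank m (μ₁ m) := by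
  unfold join; split_ifs with h
  exacts [le_rfl, (not_le.1 h).le]

theorem mrank_join_le_right (m : Fin n) : I.mrank m (I.join μ₁ μ₂ m) ≤ I.mrank m (μ₂ m) := by
  unfold join; split_ifs with h
  exacts [h, le_rfl]

theorem mrank_join_lt_left (h : I.join μ₁ μ₂ m ≠ μ₁ m) :
    I.mrank m (I.join μ₁ μ₂ m) < I.mrank m (μ₁ m) :=
  (mrank_join_le_left m).lt_of_ne ((I.mbij m).injective.ne h)

theorem mrank_join_lt_right (h : I.join μ₁ μ₂ m ≠ μ₂ m) :
    I.mrank m (I.join μ₁ μ₂ m) < I.mrank m (μ₂ m) :=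
  (mrank_join_le_right m).lt_of_ne ((I.mbij m).injective.ne h)

theorem join_ne_join_of_eq_left_of_eq_right (h₁ : I.Stable μ₁) (h₂ : I.Stable μ₂) {a b : Fin n}
    (hab : a ≠ b) (ha : I.join μ₁ μ₂ a = μ₁ a) (hb : I.join μ₁ μ₂ b = μ₂ b) :
    I.join μ₁ μ₂ a ≠ I.join μ₁ μ₂ b := by
  intro hw
  set w := I.join μ₁ μ₂ a
  have ha_lt : I.mrank a w < I.mrank a (μ₂ a) :=
    mrank_join_lt_right (hw.trans_ne (hb ▸ μ₂.injective.ne hab.symm))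
  have hb_lt : I.mrank b w < I.mrank b (μ₁ b) := by
    rw [hw]
    exact mrank_join_lt_left (hw.symm.trans_ne (ha ▸ μ₁.injective.ne hab))
  have hwb_le := h₂.wrank_symm_le ha_lt
  have hwa_le := h₁.wrank_symm_le hb_lt
  rw [μ₂.symm_apply_eq.2 (hw.trans hb)] at hwb_le
  rw [μ₁.symm_apply_eq.2 ha] at hwa_le
  exact hab ((I.wbij w).injective (hwa_le.antisymm hwb_le))

theorem join_injective (h₁ : I.Stable μ₁) (h₂ : I.Stable μ₂) : (I.join μ₁ μ₂).Injective := by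
  intro a b hab
  by_contra hne
  rcases join_eq_or (μ₁ := μ₁) (μ₂ := μ₂) a with ha | ha <;>
    rcases join_eq_or (μ₁ := μ₁) (μ₂ := μ₂) b with hb | hb
  · exact hne (μ₁.injective (ha.symm.trans (hab.trans hb)))
  · exact join_ne_join_of_eq_left_of_eq_right h₁ h₂ hne ha hb hab
  · exact join_ne_join_of_eq_left_of_eq_right h₁ h₂ (Ne.symm hne) hb ha hab.symm
  · exact hne (μ₂.injective (ha.symm.trans (hab.trans hb)))

noncomputable def joinPerm (h₁ : I.Stable μ₁) (h₂ : I.Stable μ₂) : Equiv.Perm (Fin n) :=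
  Equiv.ofBijective (I.join μ₁ μ₂) (join_injective h₁ h₂).bijective_of_finite

theorem joinPerm_apply (h₁ : I.Stable μ₁) (h₂ : I.Stable μ₂) (m : Fin n) :
    joinPerm h₁ h₂ m = I.join μ₁ μ₂ m :=
  rfl

theorem joinPerm_stable (h₁ : I.Stable μ₁) (h₂ : I.Stable μ₂) : I.Stable (joinPerm h₁ h₂) := by
  intro m w
  have hw : I.join μ₁ μ₂ ((joinPerm h₁ h₂).symm w) = w := (joinPerm h₁ h₂).apply_symm_apply w
  rcases join_eq_or ((joinPerm h₁ h₂).symm w) with h | h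
  · exact not_blocking_of_mrank_le h₁ mrank_join_le_left (h ▸ hw)
  · exact not_blocking_of_mrank_le h₂ mrank_join_le_right (h ▸ hw)

end SMInstance

/-- given two stable matchings `μ₁`, `μ₂`, assigning each man the
more preferred of `μ₁ m`, `μ₂ m` is injective, hence a well-defined perfect
matching, and this matching is stable (the join of `μ₁` and `μ₂`). -/
theorem join_is_stable {n : ℕ} (I : SMInstance n)
    (μ₁ μ₂ : Equiv.Perm (Fin n)) (h₁ : I.Stable μ₁) (h₂ : I.Stable μ₂) :
    Function.Injective
        (fun m => if I.mrank m (μ₁ m) ≤ I.mrank m (μ₂ m) then μ₁ m else μ₂ m) ∧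
      ∃ σ : Equiv.Perm (Fin n),
        (∀ m, σ m = if I.mrank m (μ₁ m) ≤ I.mrank m (μ₂ m) then μ₁ m else μ₂ m) ∧
        I.Stable σ :=
  ⟨SMInstance.join_injective h₁ h₂, SMInstance.joinPerm h₁ h₂, SMInstance.joinPerm_apply h₁ h₂,
    SMInstance.joinPerm_stable h₁ h₂⟩
end

section
/- Given two stable matchings μ₁ and μ₂, the function assigning to each man the less preferred of μ₁(m) and μ₂(m) is a well-defined stable matching (the 'meet'), and moreover in this matching every woman receives the more preferred of her two partners μ₁(w), μ₂(w). -/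
open Finset

/-! If a man strictly prefers his `μ₁`-partner `w` to his `μ₂`-partner, stability of `μ₂` forces `w`
to strictly prefer her `μ₂`-partner to him. Hence giving every man the worse of his two partners and
every woman the better of hers are mutually inverse maps, so the first is a perfect matching; a pair
blocking it would block `μ₁` or `μ₂`. -/

namespace SMInstance

variable {n : ℕ} (I : SMInstance n)

def manWorst (μ₁ μ₂ : Equiv.Perm (Fin n)) (m : Fin n) : Fin n :=
  if I.mrank m (μ₁ m) ≤ I.mrank m (μ₂ m) then μ₂ m else μ₁ m

def womanBest (μ₁ μ₂ : Equiv.Perm (Fin n)) (w : Fin n) : Fin n :=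
  if I.wrank w (μ₁.symm w) ≤ I.wrank w (μ₂.symm w) then μ₁.symm w else μ₂.symm w

variable {I}

theorem mrank_inj {m w w' : Fin n} : I.mrank m w = I.mrank m w' ↔ w = w' :=
  (I.mbij m).injective.eq_iff

theorem wrank_inj {w m m' : Fin n} : I.wrank w m = I.wrank w m' ↔ m = m' :=
  (I.wbij w).injective.eq_iff

theorem Stable.wrank_symm_lt_of_mrank_lt {μ : Equiv.Perm (Fin n)} (hμ : I.Stable μ)
    {m w : Fin n} (h : I.mrank m w < I.mrank m (μ m)) :
    I.wrank w (μ.symm w) < I.wrank w m := by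
  have hne : μ m ≠ w := by
    rintro rfl
    exact lt_irrefl _ h
  have hsymm : μ.symm w ≠ m := fun he => hne (μ.symm_apply_eq.mp he).symm
  refine lt_of_le_of_ne (not_lt.mp fun hlt => hμ m w ⟨hne, h, hlt⟩) ?_
  exact fun he => hsymm (wrank_inj.mp he)

theorem Stable.mrank_le_of_wrank_le {μ' : Equiv.Perm (Fin n)} (hμ' : I.Stable μ')
    {m w : Fin n} (h : I.wrank w m ≤ I.wrank w (μ'.symm w)) :
    I.mrank m (μ' m) ≤ I.mrank m w :=
  not_lt.mp fun hlt => (hμ'.wrank_symm_lt_of_mrank_lt hlt).not_ge h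

theorem manWorst_womanBest {μ₁ μ₂ : Equiv.Perm (Fin n)} (h₁ : I.Stable μ₁) (h₂ : I.Stable μ₂)
    (w : Fin n) : I.manWorst μ₁ μ₂ (I.womanBest μ₁ μ₂ w) = w := by
  unfold womanBest
  split_ifs with hw
  · set m := μ₁.symm w
    have hm : μ₁ m = w := μ₁.apply_symm_apply w
    have h21 : I.mrank m (μ₂ m) ≤ I.mrank m (μ₁ m) := h₂.mrank_le_of_wrank_le (hm ▸ hw)
    unfold manWorst
    split_ifs with h12
    · rw [← hm, ← mrank_inj.mp (le_antisymm h21 h12)]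
    · exact hm
  · set m := μ₂.symm w
    have hm : μ₂ m = w := μ₂.apply_symm_apply w
    have h12 : I.mrank m (μ₁ m) ≤ I.mrank m (μ₂ m) :=
      h₁.mrank_le_of_wrank_le (hm ▸ (not_le.mp hw).le)
    rw [manWorst, if_pos h12, hm]

theorem manWorst_bijective {μ₁ μ₂ : Equiv.Perm (Fin n)} (h₁ : I.Stable μ₁)
    (h₂ : I.Stable μ₂) : Function.Bijective (I.manWorst μ₁ μ₂) :=
  Finite.surjective_iff_bijective.mp fun w => ⟨_, manWorst_womanBest h₁ h₂ w⟩

theorem manWorst_eq_or_eq (μ₁ μ₂ : Equiv.Perm (Fin n)) (m : Fin n) :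
    I.manWorst μ₁ μ₂ m = μ₁ m ∨ I.manWorst μ₁ μ₂ m = μ₂ m := by
  unfold manWorst
  split_ifs
  exacts [Or.inr rfl, Or.inl rfl]

theorem wrank_womanBest_le (μ₁ μ₂ : Equiv.Perm (Fin n)) (w : Fin n) :
    I.wrank w (I.womanBest μ₁ μ₂ w) ≤ I.wrank w (μ₁.symm w) ∧
      I.wrank w (I.womanBest μ₁ μ₂ w) ≤ I.wrank w (μ₂.symm w) := by
  unfold womanBest
  split_ifs with hw
  exacts [⟨le_rfl, hw⟩, ⟨(not_le.mp hw).le, le_rfl⟩]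

theorem Blocking.of_eq_of_wrank_le {τ μ : Equiv.Perm (Fin n)} {m w : Fin n}
    (hb : I.Blocking τ m w) (hm : τ m = μ m)
    (hw : I.wrank w (τ.symm w) ≤ I.wrank w (μ.symm w)) : I.Blocking μ m w := by
  obtain ⟨hne, hmw, hwm⟩ := hb
  exact ⟨hm ▸ hne, hm ▸ hmw, hwm.trans_le hw⟩

theorem stable_of_eq_or_eq_of_wrank_le {μ₁ μ₂ τ : Equiv.Perm (Fin n)}
    (h₁ : I.Stable μ₁) (h₂ : I.Stable μ₂) (hm : ∀ m, τ m = μ₁ m ∨ τ m = μ₂ m)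
    (hw : ∀ w, I.wrank w (τ.symm w) ≤ I.wrank w (μ₁.symm w) ∧
      I.wrank w (τ.symm w) ≤ I.wrank w (μ₂.symm w)) :
    I.Stable τ := by
  intro m w hb
  rcases hm m with h | h
  · exact h₁ m w (hb.of_eq_of_wrank_le h (hw w).1)
  · exact h₂ m w (hb.of_eq_of_wrank_le h (hw w).2)

end SMInstance

/-- given two stable matchings `μ₁`, `μ₂`, assigning each man the
less preferred of `μ₁ m`, `μ₂ m` is a well-defined perfect matching, it is
stable (the meet), and in it every woman receives the more preferred of her two
partners `μ₁.symm w`, `μ₂.symm w`. -/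
theorem meet_is_stable {n : ℕ} (I : SMInstance n)
    (μ₁ μ₂ : Equiv.Perm (Fin n)) (h₁ : I.Stable μ₁) (h₂ : I.Stable μ₂) :
    ∃ τ : Equiv.Perm (Fin n),
      (∀ m, τ m = if I.mrank m (μ₁ m) ≤ I.mrank m (μ₂ m) then μ₂ m else μ₁ m) ∧
      I.Stable τ ∧
      ∀ w, τ.symm w =
        if I.wrank w (μ₁.symm w) ≤ I.wrank w (μ₂.symm w) then μ₁.symm w
        else μ₂.symm w := by
  let τ := Equiv.ofBijective _ (SMInstance.manWorst_bijective h₁ h₂)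
  have hτ_symm : ∀ w, τ.symm w = I.womanBest μ₁ μ₂ w := fun w =>
    τ.symm_apply_eq.mpr (SMInstance.manWorst_womanBest h₁ h₂ w).symm
  refine ⟨τ, fun m => rfl, ?_, hτ_symm⟩
  refine SMInstance.stable_of_eq_or_eq_of_wrank_le h₁ h₂ (SMInstance.manWorst_eq_or_eq μ₁ μ₂)
    fun w => ?_
  rw [hτ_symm]
  exact SMInstance.wrank_womanBest_le μ₁ μ₂ w
end

section
/- If two stable matchings μ and μ' satisfy: every man weakly prefers his partner in μ' to his partner in μ, then every woman weakly prefers her partner in μ to her partner in μ'. (Opposition of interests between the two sides across the stable lattice.) -/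
open Finset

namespace SMInstance

variable {n : ℕ} {I : SMInstance n} {μ : Equiv.Perm (Fin n)}

theorem Stable.wrank_partner_le (h : I.Stable μ) {m w : Fin n}
    (hm : I.mrank m w ≤ I.mrank m (μ m)) : I.wrank w (μ.symm w) ≤ I.wrank w m := by
  by_cases hw : μ m = w
  · rw [← hw, Equiv.symm_apply_apply]
  have hlt : I.mrank m w < I.mrank m (μ m) :=
    hm.lt_of_ne fun he => hw ((I.mbij m).injective he).symm
  exact not_lt.mp fun hwm => h m w ⟨hw, hlt, hwm⟩

end SMInstance

theorem opposition_of_interests_general {n : ℕ} (I : SMInstance n)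
    (μ μ' : Equiv.Perm (Fin n)) (h : I.Stable μ)
    (hdom : ∀ m : Fin n, I.mrank m (μ' m) ≤ I.mrank m (μ m)) :
    ∀ w : Fin n, I.wrank w (μ.symm w) ≤ I.wrank w (μ'.symm w) := by
  intro w
  apply h.wrank_partner_le
  simpa using hdom (μ'.symm w)

/-- if every man weakly prefers his partner in the stable matching
`μ'` to his partner in the stable matching `μ`, then every woman weakly prefers
her partner in `μ` to her partner in `μ'`. -/
theorem opposition_of_interests {n : ℕ} (I : SMInstance n)
    (μ μ' : Equiv.Perm (Fin n)) (h : I.Stable μ) (h' : I.Stable μ')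
    (hdom : ∀ m : Fin n, I.mrank m (μ' m) ≤ I.mrank m (μ m)) :
    ∀ w : Fin n, I.wrank w (μ.symm w) ≤ I.wrank w (μ'.symm w) :=
  opposition_of_interests_general I μ μ' h hdom
end
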